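/- For every integer q ≥ 3 and every integer n ≥ 3, the set CBFS_q(n) is non-expandable on BF_q(n): for every bifix-free word w ∈ BF_q(n) \ CBFS_q(n) there exists a word w' ∈ CBFS_q(n) such that some nonempty proper prefix of w is a suffix of w' or some nonempty proper prefix of w' is a suffix of w. -/

import Mathlib

/-- Value of a letter: 1 ↦ +1, 0 ↦ -1, other letters ↦ 0. -/
def mval (a : ℕ) : ℤ := if a = 1 then 1 else if a = 0 then -1 else 0

/-- Value-sum of a word. -/
def vsum (w : List ℕ) : ℤ := (w.map mval).sum

/-- A (q-2)-colored Motzkin word over the alphabet Z_q = {0,...,q-1}: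
all letters < q, every prefix has nonnegative value-sum, total value-sum 0. -/
def IsMotzkinWord (q : ℕ) (w : List ℕ) : Prop :=
  (∀ a ∈ w, a < q) ∧ (∀ u, u <+: w → 0 ≤ vsum u) ∧ vsum w = 0

/-- The set 𝓜_{q-2}(n) of (q-2)-colored Motzkin words of length n. -/
def MotzkinSet (q n : ℕ) : Set (List ℕ) := {w | w.length = n ∧ IsMotzkinWord q w}

/-- M_{q-2}(n), the number of (q-2)-colored Motzkin words of length n. -/
noncomputable def Mnum (q n : ℕ) : ℕ := (MotzkinSet q n).ncard

/-- The set Ê_{q-2}(n) of elevated (q-2)-colored Motzkin words of length n: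
words 1α0 with α ∈ 𝓜_{q-2}(n-2). -/
def ElevatedSet (q n : ℕ) : Set (List ℕ) :=
  {w | w.length = n ∧ ∃ α ∈ MotzkinSet q (n - 2), w = 1 :: (α ++ [0])}

/-- The set A_q(n). -/
def SetA (q n : ℕ) : Set (List ℕ) :=
  {w | ∃ i ≤ n / 2, ∃ α ∈ MotzkinSet q i, ∃ β ∈ ElevatedSet q (n - i), w = α ++ β} \
    {w | ∃ α ∈ ElevatedSet q (n / 2), ∃ β ∈ ElevatedSet q (n / 2), w = α ++ β}

/-- The set B_q(n). -/
def SetB (q n : ℕ) : Set (List ℕ) :=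
  {w | ∃ i ≤ n / 2 - 1, ∃ α ∈ MotzkinSet q i, ∃ β ∈ ElevatedSet q (n - i - 1),
    w = 1 :: (α ++ β)}

/-- The set C_q(n): words γ0 with γ a (q-2)-colored Motzkin word of length n-1
having no factor which is an elevated Motzkin word of length j ≥ ⌈n/2⌉. -/
def SetC (q n : ℕ) : Set (List ℕ) :=
  {w | ∃ γ ∈ MotzkinSet q (n - 1),
    (∀ j, (n + 1) / 2 ≤ j → ∀ β ∈ ElevatedSet q j, ¬ β <:+: γ) ∧ w = γ ++ [0]}

/-- The cross-bifix-free candidate set CBFS_q(n). -/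
def CBFS (q n : ℕ) : Set (List ℕ) := SetA q n ∪ SetB q n ∪ SetC q n

/-- A word is bifix-free if no nonempty proper prefix of it is also a suffix of it. -/
def BifixFree (w : List ℕ) : Prop :=
  ∀ u, u <+: w → u ≠ [] → u.length < w.length → ¬ u <:+ w

/-- BF_q(n): the set of bifix-free words of length n over Z_q. -/
def BF (q n : ℕ) : Set (List ℕ) := {w | w.length = n ∧ (∀ a ∈ w, a < q) ∧ BifixFree w}

/-- F_{k,q}(n): the number of words of length n over Z_q avoiding k consecutive 0's. -/
noncomputable def Fcount (k q n : ℕ) : ℕ :=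
  {w : List ℕ | w.length = n ∧ (∀ a ∈ w, a < q) ∧ ¬ List.replicate k 0 <:+: w}.ncard

/-- The set S_{k,q}(n) of Bajic--Stojanovic--Chee--Kiah type words: words s of length n
over Z_q with s₁ = ⋯ = s_k = 0, s_{k+1} ≠ 0, s_n ≠ 0, and such that the subword
s_{k+2} ⋯ s_{n-1} contains no k consecutive 0's. -/
def SetS (q k n : ℕ) : Set (List ℕ) :=
  {s | s.length = n ∧ (∀ a ∈ s, a < q) ∧ s.take k = List.replicate k 0 ∧
    s.getD k 0 ≠ 0 ∧ s.getLast? ≠ some 0 ∧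
    ¬ List.replicate k 0 <:+: (s.drop (k + 1)).take (n - k - 2)}

/-!
Read a word as a lattice path: `1` steps up, `0` steps down, the other letters are flat. For
`w ∉ CBFS_q(n)` an overlapping word of `CBFS_q(n)` is read off from the shape of this path.
A last letter `1` or `c ≥ 2` begins `1 1 2ⁿ⁻³ 0 ∈ B_q(n)` or `cⁿ⁻¹ 0 ∈ C_q(n)`; otherwise the path
ends with a down-step.

If the path dips below `0`, the first dip gives a prefix `v 0` of `w` with `v` Motzkin, and
`2⋯2 v 0 ∈ C_q(n)` unless `v` has an elevated factor of length `≥ ⌈n/2⌉`; the leftmost such factor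
`β` is preceded by a Motzkin word `x`, and then `2⋯2 x β ∈ A_q(n)`.

If the path stays nonnegative, either some proper suffix of `w` has total value `1` and all its
nonempty prefixes of positive value, and padding it by `2⋯2 0` gives an elevated word of `A_q(n)`;
or the last visit of the final level cuts off an elevated suffix. A short one begins a word of
`C_q(n)`; a long one puts `w` into `A_q(n) ∪ B_q(n)`, unless `w = e₁ e₂` with both halves elevated,
and then `e₁` is a suffix of `2⋯2 e₁ ∈ A_q(n)`.
-/

lemma exists_last_lt {f : ℕ → ℤ} {c : ℤ} {i b : ℕ} (hib : i ≤ b) (hi : f i < c) :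
    ∃ k ≤ b, f k < c ∧ ∀ j, k < j → j ≤ b → c ≤ f j := by
  classical
  exact ⟨Nat.findGreatest (fun k => f k < c) b, Nat.findGreatest_le b,
    Nat.findGreatest_spec (P := fun k => f k < c) hib hi,
    fun j hj hjb => not_lt.mp (Nat.findGreatest_is_greatest hj hjb)⟩

lemma exists_first_lt {f : ℕ → ℤ} {c : ℤ} {a b : ℕ} (hab : a ≤ b) (hb : f b < c) :
    ∃ k, a ≤ k ∧ k ≤ b ∧ f k < c ∧ ∀ j, a ≤ j → j < k → c ≤ f j := by
  classical
  have hex : ∃ k, a ≤ k ∧ f k < c := ⟨b, hab, hb⟩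
  obtain ⟨hak, hk⟩ := Nat.find_spec hex
  refine ⟨Nat.find hex, hak, Nat.find_min' hex ⟨hab, hb⟩, hk, fun j haj hj => ?_⟩
  exact not_lt.mp fun h => Nat.find_min hex hj ⟨haj, h⟩

lemma List.cons_infix_of_cons_infix_replicate_append {α : Type*} {a c : α} {m : ℕ}
    {t v : List α} (hac : a ≠ c) (h : a :: t <:+: List.replicate m c ++ v) : a :: t <:+: v := by
  induction m with
  | zero => simpa using h
  | succ m ih =>
    rw [List.replicate_succ, List.cons_append, List.infix_cons_iff] at h
    rcases h with h | h
    · exact absurd (List.cons_prefix_cons.mp h).1 hac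
    · exact ih h

lemma List.append_singleton_infix_of_infix_append_replicate {α : Type*} {a c : α} {m : ℕ}
    {t v : List α} (hac : a ≠ c) (h : t ++ [a] <:+: v ++ List.replicate m c) :
    t ++ [a] <:+: v := by
  rw [← List.reverse_infix] at h ⊢
  simp only [List.reverse_append, List.reverse_cons, List.reverse_nil, List.nil_append,
    List.singleton_append, List.reverse_replicate] at h ⊢
  exact List.cons_infix_of_cons_infix_replicate_append hac h

lemma mval_le_one (a : ℕ) : mval a ≤ 1 := by unfold mval; split_ifs <;> omega

lemma neg_one_le_mval (a : ℕ) : -1 ≤ mval a := by unfold mval; split_ifs <;> omega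

lemma mval_eq_one_iff {a : ℕ} : mval a = 1 ↔ a = 1 := by unfold mval; split_ifs <;> simp_all

lemma mval_eq_neg_one_iff {a : ℕ} : mval a = -1 ↔ a = 0 := by unfold mval; split_ifs <;> simp_all

@[simp] lemma mval_one : mval 1 = 1 := rfl

@[simp] lemma mval_zero : mval 0 = -1 := rfl

lemma mval_of_two_le {a : ℕ} (h : 2 ≤ a) : mval a = 0 := by unfold mval; split_ifs <;> omega

@[simp] lemma vsum_nil : vsum [] = 0 := rfl

@[simp] lemma vsum_cons (a : ℕ) (w : List ℕ) : vsum (a :: w) = mval a + vsum w := by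
  simp [vsum]

@[simp] lemma vsum_append (u v : List ℕ) : vsum (u ++ v) = vsum u + vsum v := by
  simp [vsum]

@[simp] lemma vsum_singleton (a : ℕ) : vsum [a] = mval a := by simp [vsum]

lemma vsum_replicate_of_two_le (m : ℕ) {c : ℕ} (hc : 2 ≤ c) : vsum (List.replicate m c) = 0 := by
  simp [vsum, mval_of_two_le hc]

def height (w : List ℕ) (i : ℕ) : ℤ := vsum (w.take i)

@[simp] lemma height_zero (w : List ℕ) : height w 0 = 0 := by simp [height]

lemma height_of_length_le {w : List ℕ} {i : ℕ} (h : w.length ≤ i) : height w i = vsum w := by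
  rw [height, List.take_of_length_le h]

lemma height_succ {w : List ℕ} {i : ℕ} (h : i < w.length) :
    height w (i + 1) = height w i + mval w[i] := by
  rw [height, List.take_succ_eq_append_getElem h, vsum_append, vsum_singleton, height]

lemma height_succ_le (w : List ℕ) (i : ℕ) : height w (i + 1) ≤ height w i + 1 := by
  rcases lt_or_ge i w.length with h | h
  · rw [height_succ h]; linarith [mval_le_one w[i]]
  · rw [height_of_length_le h, height_of_length_le (by omega)]; omega

lemma height_le_height_succ (w : List ℕ) (i : ℕ) : height w i ≤ height w (i + 1) + 1 := by
  rcases lt_or_ge i w.length with h | h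
  · rw [height_succ h]; linarith [neg_one_le_mval w[i]]
  · rw [height_of_length_le h, height_of_length_le (by omega)]; omega

lemma height_add (w : List ℕ) (k r : ℕ) :
    height w (k + r) = height w k + height (w.drop k) r := by
  simp [height, List.take_add]

lemma height_take {w : List ℕ} {k i : ℕ} (h : i ≤ k) : height (w.take k) i = height w i := by
  rw [height, List.take_take, min_eq_left h, height]

lemma height_append (u v : List ℕ) (i : ℕ) :
    height (u ++ v) i = height u i + height v (i - u.length) := by
  simp [height, List.take_append]

lemma height_append_left {u v : List ℕ} {i : ℕ} (h : i ≤ u.length) :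
    height (u ++ v) i = height u i := by
  rw [height, List.take_append_of_le_length h, height]

lemma height_cons_succ (a : ℕ) (w : List ℕ) (i : ℕ) :
    height (a :: w) (i + 1) = mval a + height w i := by
  simp [height]

lemma mem_motzkinSet_iff {q k : ℕ} {w : List ℕ} :
    w ∈ MotzkinSet q k ↔
      w.length = k ∧ (∀ a ∈ w, a < q) ∧ (∀ i, 0 ≤ height w i) ∧ vsum w = 0 := by
  refine ⟨fun ⟨hk, hlt, hpre, hsum⟩ => ⟨hk, hlt, fun i => hpre _ (List.take_prefix i w), hsum⟩,
    fun ⟨hk, hlt, hpre, hsum⟩ => ⟨hk, hlt, fun u hu => ?_, hsum⟩⟩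
  rw [List.prefix_iff_eq_take.mp hu]
  exact hpre _

lemma heights_of_mem_elevatedSet {q k : ℕ} {w : List ℕ} (h : w ∈ ElevatedSet q k) :
    w.length = k ∧ 2 ≤ k ∧ vsum w = 0 ∧ ∀ r, 0 < r → r < k → 1 ≤ height w r := by
  obtain ⟨hk, α, hα, rfl⟩ := h
  obtain ⟨-, -, hαpre, hαsum⟩ := mem_motzkinSet_iff.mp hα
  simp only [List.length_cons, List.length_append, List.length_nil] at hk
  refine ⟨by simp; omega, by omega, by simp [hαsum], fun r hr0 hrk => ?_⟩
  obtain ⟨r, rfl⟩ := Nat.exists_eq_add_one_of_ne_zero hr0.ne'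
  rw [height_cons_succ, height_append_left (by omega)]
  simpa using hαpre r

lemma lt_of_mem_elevatedSet {q k : ℕ} (hq : 2 ≤ q) {w : List ℕ} (h : w ∈ ElevatedSet q k) :
    ∀ a ∈ w, a < q := by
  obtain ⟨-, α, hα, rfl⟩ := h
  intro a ha
  simp only [List.mem_cons, List.mem_append, List.not_mem_nil, or_false] at ha
  rcases ha with rfl | ha | rfl
  exacts [by omega, (mem_motzkinSet_iff.mp hα).2.1 a ha, by omega]

lemma mem_elevatedSet_of_heights {q : ℕ} {w : List ℕ} (hlt : ∀ a ∈ w, a < q)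
    (h2 : 2 ≤ w.length) (hsum : vsum w = 0)
    (hint : ∀ r, 0 < r → r < w.length → 1 ≤ height w r) : w ∈ ElevatedSet q w.length := by
  obtain ⟨a, t, rfl⟩ := List.exists_cons_of_length_pos (by omega : 0 < w.length)
  obtain ⟨α, c, rfl⟩ : ∃ α c, t = α ++ [c] := by
    rcases List.eq_nil_or_concat' t with rfl | h
    · simp at h2
    · exact h
  simp only [List.length_cons, List.length_append, List.length_nil] at hint
  have ha : a = 1 := by
    have := hint 1 (by omega) (by omega)
    rw [show (1 : ℕ) = 0 + 1 from rfl, height_cons_succ, height_zero] at this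
    exact mval_eq_one_iff.mp (by linarith [mval_le_one a])
  subst ha
  have hαpre : ∀ i, i ≤ α.length → 0 ≤ height α i := fun i hi => by
    have := hint (i + 1) (by omega) (by omega)
    rwa [height_cons_succ, height_append_left hi, mval_one, le_add_iff_nonneg_right] at this
  have hαsum : vsum α = 0 ∧ c = 0 := by
    have := hαpre α.length le_rfl
    rw [height_of_length_le le_rfl] at this
    simp only [vsum_cons, vsum_append, vsum_nil, mval_one] at hsum
    have := neg_one_le_mval c
    exact ⟨by omega, mval_eq_neg_one_iff.mp (by omega)⟩
  obtain ⟨hαsum, rfl⟩ := hαsum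
  refine ⟨rfl, α, mem_motzkinSet_iff.mpr ⟨by simp, fun b hb => hlt b (by simp [hb]),
    fun i => ?_, hαsum⟩, rfl⟩
  rcases le_or_gt i α.length with hi | hi
  · exact hαpre i hi
  · rw [height_of_length_le hi.le, hαsum]

lemma nil_mem_motzkinSet (q : ℕ) : [] ∈ MotzkinSet q 0 :=
  mem_motzkinSet_iff.mpr ⟨rfl, by simp, fun i => by simp [height], rfl⟩

lemma height_replicate_of_two_le (m i : ℕ) {c : ℕ} (hc : 2 ≤ c) :
    height (List.replicate m c) i = 0 := by
  rw [height, List.take_replicate, vsum_replicate_of_two_le _ hc]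

lemma replicate_mem_motzkinSet {q c : ℕ} (m : ℕ) (hc : 2 ≤ c) (hcq : c < q) :
    List.replicate m c ∈ MotzkinSet q m :=
  mem_motzkinSet_iff.mpr ⟨List.length_replicate, fun a ha => by rwa [List.eq_of_mem_replicate ha],
    fun i => (height_replicate_of_two_le m i hc).ge, vsum_replicate_of_two_le m hc⟩

lemma append_mem_motzkinSet {q i j : ℕ} {u v : List ℕ} (hu : u ∈ MotzkinSet q i)
    (hv : v ∈ MotzkinSet q j) : u ++ v ∈ MotzkinSet q (i + j) := by
  obtain ⟨hui, hult, hupre, husum⟩ := mem_motzkinSet_iff.mp hu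
  obtain ⟨hvj, hvlt, hvpre, hvsum⟩ := mem_motzkinSet_iff.mp hv
  refine mem_motzkinSet_iff.mpr ⟨by simp [hui, hvj], ?_, fun r => ?_, by simp [husum, hvsum]⟩
  · simp only [List.mem_append]
    rintro a (ha | ha)
    exacts [hult a ha, hvlt a ha]
  · rw [height_append]
    linarith [hupre r, hvpre (r - u.length)]

lemma elevatedSet_subset_motzkinSet {q k : ℕ} (hq : 2 ≤ q) :
    ElevatedSet q k ⊆ MotzkinSet q k := by
  intro w hw
  obtain ⟨hk, h2, hsum, hint⟩ := heights_of_mem_elevatedSet hw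
  refine mem_motzkinSet_iff.mpr ⟨hk, lt_of_mem_elevatedSet hq hw, fun r => ?_, hsum⟩
  rcases Nat.eq_zero_or_pos r with rfl | hr0
  · simp
  rcases lt_or_ge r k with hr | hr
  · linarith [hint r hr0 hr]
  · rw [height_of_length_le (by omega), hsum]

lemma take_mem_motzkinSet {q j : ℕ} {v : List ℕ} (hlt : ∀ a ∈ v, a < q) (hj : j ≤ v.length)
    (hpre : ∀ i ≤ j, 0 ≤ height v i) (hend : height v j = 0) : v.take j ∈ MotzkinSet q j := by
  refine mem_motzkinSet_iff.mpr ⟨by simp [hj], fun a ha => hlt a (List.mem_of_mem_take ha),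
    fun i => ?_, hend⟩
  rcases le_or_gt i j with hi | hi
  · rw [height_take hi]; exact hpre i hi
  · rw [height, List.take_take, min_eq_right hi.le]; exact hpre j le_rfl

lemma factor_mem_elevatedSet_iff {q s j : ℕ} {v : List ℕ} (hlt : ∀ a ∈ v, a < q) :
    (v.drop s).take j ∈ ElevatedSet q j ↔ s + j ≤ v.length ∧ 2 ≤ j ∧
      height v (s + j) = height v s ∧ ∀ r, 0 < r → r < j → height v s < height v (s + r) := by
  have hheight : ∀ r ≤ j, height ((v.drop s).take j) r = height v (s + r) - height v s :=
    fun r hr => by rw [height_take hr, height_add]; ring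
  constructor
  · intro h
    obtain ⟨hlen, h2, hsum, hint⟩ := heights_of_mem_elevatedSet h
    have hsj : s + j ≤ v.length := by simp at hlen; omega
    refine ⟨hsj, h2, ?_, fun r hr0 hrj => ?_⟩
    · have := hheight j le_rfl
      rw [height_of_length_le hlen.le, hsum] at this
      omega
    · have := hint r hr0 hrj
      rw [hheight r hrj.le] at this
      omega
  · rintro ⟨hsj, h2, hend, hint⟩
    have hlen : ((v.drop s).take j).length = j := by simp; omega
    have h := mem_elevatedSet_of_heights (q := q) (w := (v.drop s).take j)
      (fun a ha => hlt a (List.mem_of_mem_drop (List.mem_of_mem_take ha))) (by omega)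
      (by rw [← height_of_length_le hlen.le, hheight j le_rfl, hend, sub_self])
      (fun r hr0 hrj => by
        rw [hlen] at hrj
        rw [hheight r hrj.le]
        have := hint r hr0 hrj
        omega)
    rwa [hlen] at h

/-- If the elevated factor at `s` had positive height, the last visit of the level below
before it and the first visit after it would bound a longer elevated factor further left. -/
lemma height_eq_zero_of_leftmost_elevated_factor {q s j : ℕ} {v : List ℕ}
    (hv : v ∈ MotzkinSet q v.length) (hβ : (v.drop s).take j ∈ ElevatedSet q j)
    (hleft : ∀ a < s, ∀ j', j ≤ j' → (v.drop a).take j' ∉ ElevatedSet q j') :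
    height v s = 0 := by
  obtain ⟨-, hlt, hnonneg, hsum⟩ := mem_motzkinSet_iff.mp hv
  obtain ⟨hsj, h2, hend, hint⟩ := (factor_mem_elevatedSet_iff hlt).mp hβ
  by_contra hne
  set c := height v s
  have hc : 0 < c := lt_of_le_of_ne (hnonneg s) (Ne.symm hne)
  obtain ⟨a, has, ha, hafter⟩ := exists_last_lt (f := height v) (Nat.zero_le s)
    (by rw [height_zero]; exact hc)
  obtain ⟨b, hjb, hbv, hb, hbefore⟩ := exists_first_lt (f := height v) (c := c) hsj
    (by rw [height_of_length_le le_rfl, hsum]; exact hc)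
  have has' : a < s := lt_of_le_of_ne has (by rintro rfl; exact lt_irrefl _ ha)
  have hjb' : s + j < b := lt_of_le_of_ne hjb (by rintro rfl; omega)
  have hfa : height v a = c - 1 := by
    have := height_succ_le v a
    have := hafter (a + 1) (by omega) (by omega)
    omega
  have hfb : height v b = c - 1 := by
    have := height_le_height_succ v (b - 1)
    have := hbefore (b - 1) (by omega) (by omega)
    rw [Nat.sub_add_cancel (by omega)] at *
    omega
  refine hleft a has' (b - a) (by omega) ((factor_mem_elevatedSet_iff hlt).mpr
    ⟨by omega, by omega, by rw [Nat.add_sub_cancel' (by omega)]; omega, fun r hr0 hr => ?_⟩)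
  rw [hfa]
  rcases le_or_gt (a + r) s with h | h
  · have := hafter (a + r) (by omega) h; omega
  rcases lt_or_ge (a + r) (s + j) with h' | h'
  · have := hint (a + r - s) (by omega) (by omega)
    rw [Nat.add_sub_cancel' h.le] at this
    omega
  · have := hbefore (a + r) h' (by omega); omega

lemma exists_motzkin_append_elevated_prefix {q m : ℕ} {v : List ℕ}
    (hv : v ∈ MotzkinSet q v.length) (hfac : ∃ j, m ≤ j ∧ ∃ β ∈ ElevatedSet q j, β <:+: v) :
    ∃ x β j, x ∈ MotzkinSet q x.length ∧ m ≤ j ∧ β ∈ ElevatedSet q j ∧ x ++ β <+: v := by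
  classical
  obtain ⟨-, hlt, hnonneg, -⟩ := mem_motzkinSet_iff.mp hv
  have hP : ∃ s j, m ≤ j ∧ (v.drop s).take j ∈ ElevatedSet q j := by
    obtain ⟨j, hj, β, hβ, s, t, rfl⟩ := hfac
    obtain rfl := (heights_of_mem_elevatedSet hβ).1
    refine ⟨s.length, β.length, hj, ?_⟩
    rwa [List.append_assoc, List.drop_left, List.take_left]
  obtain ⟨j, hj, hβ⟩ := Nat.find_spec hP
  set s := Nat.find hP
  have hs0 := height_eq_zero_of_leftmost_elevated_factor hv hβ
    fun a ha j' hjj' hβ' => Nat.find_min hP ha ⟨j', hj.trans hjj', hβ'⟩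
  have hsj := ((factor_mem_elevatedSet_iff hlt).mp hβ).1
  refine ⟨v.take s, (v.drop s).take j, j, ?_, hj, hβ, ?_⟩
  · rw [List.length_take, min_eq_left (by omega)]
    exact take_mem_motzkinSet hlt (by omega) (fun i _ => hnonneg i) hs0
  · rw [← List.take_add]
    exact List.take_prefix _ v

lemma replicate_append_mem_setA {q n j : ℕ} (hq : 3 ≤ q) {x β : List ℕ}
    (hx : x ∈ MotzkinSet q x.length) (hβ : β ∈ ElevatedSet q j) (hj : (n + 1) / 2 ≤ j)
    (hlen : x.length + j < n) :
    List.replicate (n - j - x.length) 2 ++ (x ++ β) ∈ SetA q n := by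
  refine ⟨⟨n - j, by omega, List.replicate (n - j - x.length) 2 ++ x, ?_, β, ?_, by simp⟩, ?_⟩
  · have := append_mem_motzkinSet
      (replicate_mem_motzkinSet (n - j - x.length) le_rfl (by omega : 2 < q)) hx
    rwa [Nat.sub_add_cancel (by omega)] at this
  · rwa [Nat.sub_sub_self (by omega)]
  · rintro ⟨e₁, ⟨-, α, -, rfl⟩, e₂, -, heq⟩
    rw [show n - j - x.length = (n - j - x.length - 1) + 1 by omega, List.replicate_succ] at heq
    simp at heq

lemma mem_setA_of_mem_elevatedSet {q n : ℕ} {w : List ℕ} (h : w ∈ ElevatedSet q n) :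
    w ∈ SetA q n := by
  refine ⟨⟨0, Nat.zero_le _, [], nil_mem_motzkinSet q, w, by simpa using h, rfl⟩, ?_⟩
  rintro ⟨e₁, he₁, e₂, -, rfl⟩
  obtain ⟨hlen, h2, -, hint⟩ := heights_of_mem_elevatedSet h
  obtain ⟨hlen₁, -, hsum₁, -⟩ := heights_of_mem_elevatedSet he₁
  have := hint (n / 2) (by omega) (by omega)
  rw [height_append_left hlen₁.ge, height_of_length_le hlen₁.le, hsum₁] at this
  omega

lemma append_replicate_mem_setA {q n : ℕ} (hq : 3 ≤ q) {T : List ℕ} (hlt : ∀ a ∈ T, a < q)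
    (hT : 0 < T.length) (hTn : T.length < n) (hpos : ∀ r, 0 < r → 1 ≤ height T r)
    (hsum : vsum T = 1) :
    T ++ (List.replicate (n - T.length - 1) 2 ++ [0]) ∈ SetA q n := by
  set W := T ++ (List.replicate (n - T.length - 1) 2 ++ [0]) with hW
  have hlen : W.length = n := by simp [hW]; omega
  apply mem_setA_of_mem_elevatedSet
  rw [← hlen]
  apply mem_elevatedSet_of_heights
  · simp only [hW, List.mem_append, List.mem_replicate, List.mem_singleton]
    rintro a (ha | ⟨-, rfl⟩ | rfl)
    exacts [hlt a ha, by omega, by omega]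
  · omega
  · simp [hW, hsum, vsum_replicate_of_two_le _ (le_refl 2)]
  · intro r hr0 hrn
    rw [hlen] at hrn
    rw [hW, height_append]
    rcases le_or_gt r T.length with h | h
    · rw [Nat.sub_eq_zero_of_le h, height_zero, add_zero]
      exact hpos r hr0
    · rw [height_append_left (by simp; omega), height_replicate_of_two_le _ _ le_rfl,
        height_of_length_le h.le, hsum, add_zero]

lemma append_replicate_mem_setC {q n ℓ : ℕ} (hq : 3 ≤ q) {T : List ℕ}
    (hT : T ∈ ElevatedSet q ℓ) (hℓ : ℓ < (n + 1) / 2) :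
    T ++ (List.replicate (n - 1 - ℓ) 2 ++ [0]) ∈ SetC q n := by
  have hTlen := (heights_of_mem_elevatedSet hT).1
  refine ⟨T ++ List.replicate (n - 1 - ℓ) 2, ?_, fun j hj β hβ hinf => ?_, by simp⟩
  · have := append_mem_motzkinSet (elevatedSet_subset_motzkinSet (by omega) hT)
      (replicate_mem_motzkinSet (n - 1 - ℓ) le_rfl (by omega : 2 < q))
    rwa [show ℓ + (n - 1 - ℓ) = n - 1 by omega] at this
  · have hβlen := (heights_of_mem_elevatedSet hβ).1
    obtain ⟨-, α, -, rfl⟩ := hβ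
    rw [← List.cons_append] at hinf hβlen
    have := (List.append_singleton_infix_of_infix_append_replicate (by decide) hinf).length_le
    omega

lemma replicate_append_mem_setC {q n : ℕ} (hq : 3 ≤ q) {v : List ℕ}
    (hv : v ∈ MotzkinSet q v.length) (hvn : v.length < n)
    (hnofac : ∀ j, (n + 1) / 2 ≤ j → ∀ β ∈ ElevatedSet q j, ¬ β <:+: v) :
    List.replicate (n - 1 - v.length) 2 ++ v ++ [0] ∈ SetC q n := by
  refine ⟨List.replicate (n - 1 - v.length) 2 ++ v, ?_, fun j hj β hβ hinf => ?_, rfl⟩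
  · have := append_mem_motzkinSet
      (replicate_mem_motzkinSet (n - 1 - v.length) le_rfl (by omega : 2 < q)) hv
    rwa [Nat.sub_add_cancel (by omega)] at this
  · obtain ⟨hβlen, α, hα, rfl⟩ := hβ
    exact hnofac j hj _ ⟨hβlen, α, hα, rfl⟩
      (List.cons_infix_of_cons_infix_replicate_append (by decide) hinf)

lemma one_cons_one_cons_replicate_mem_setB {q n : ℕ} (hq : 3 ≤ q) (hn : 3 ≤ n) :
    1 :: 1 :: (List.replicate (n - 3) 2 ++ [0]) ∈ SetB q n := by
  refine ⟨0, Nat.zero_le _, [], nil_mem_motzkinSet q, _, ⟨by simp; omega, _, ?_, rfl⟩, rfl⟩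
  rw [show n - 0 - 1 - 2 = n - 3 by omega]
  exact replicate_mem_motzkinSet _ le_rfl (by omega)

def Overlaps {α : Type*} (u v : List α) : Prop :=
  ∃ t, t <+: u ∧ t ≠ [] ∧ t.length < u.length ∧ t <:+ v

def OverlapsSome {α : Type*} (S : Set (List α)) (w : List α) : Prop :=
  ∃ w' ∈ S, Overlaps w w' ∨ Overlaps w' w

lemma overlapsSome_cbfs_of_one_suffix {q n : ℕ} (hq : 3 ≤ q) (hn : 3 ≤ n) {w : List ℕ}
    (h : [1] <:+ w) : OverlapsSome (CBFS q n) w :=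
  ⟨_, Or.inl (Or.inr (one_cons_one_cons_replicate_mem_setB hq hn)),
    Or.inr ⟨[1], ⟨_, rfl⟩, by simp, by simp, h⟩⟩

lemma overlapsSome_cbfs_of_color_suffix {q n c : ℕ} (hn : 2 ≤ n) (hc : 2 ≤ c) (hcq : c < q)
    {w : List ℕ} (h : [c] <:+ w) : OverlapsSome (CBFS q n) w := by
  have hC : List.replicate (n - 1) c ++ [0] ∈ SetC q n := by
    refine ⟨_, replicate_mem_motzkinSet _ hc hcq, fun j _ β hβ hinf => ?_, rfl⟩
    obtain ⟨-, α, -, rfl⟩ := hβ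
    have := List.eq_of_mem_replicate (hinf.subset List.mem_cons_self)
    omega
  refine ⟨_, Or.inr hC,
    Or.inr ⟨[c], ⟨List.replicate (n - 2) c ++ [0], ?_⟩, by simp, by simp; omega, h⟩⟩
  rw [show n - 1 = n - 2 + 1 by omega, List.replicate_succ]
  rfl

lemma overlapsSome_cbfs_of_positive_suffix {q n : ℕ} (hq : 3 ≤ q) {w T : List ℕ}
    (hTw : T <:+ w) (hlt : ∀ a ∈ T, a < q) (hT : 0 < T.length) (hTn : T.length < n)
    (hpos : ∀ r, 0 < r → 1 ≤ height T r) (hsum : vsum T = 1) : OverlapsSome (CBFS q n) w :=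
  ⟨_, Or.inl (Or.inl (append_replicate_mem_setA hq hlt hT hTn hpos hsum)),
    Or.inr ⟨T, List.prefix_append _ _, List.ne_nil_of_length_pos hT, by simp, hTw⟩⟩

lemma overlapsSome_cbfs_of_short_elevated_suffix {q n ℓ : ℕ} (hq : 3 ≤ q) {w T : List ℕ}
    (hT : T ∈ ElevatedSet q ℓ) (hℓ : ℓ < (n + 1) / 2) (hTw : T <:+ w) :
    OverlapsSome (CBFS q n) w := by
  obtain ⟨hlen, h2, -⟩ := heights_of_mem_elevatedSet hT
  exact ⟨_, Or.inr (append_replicate_mem_setC hq hT hℓ),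
    Or.inr ⟨T, List.prefix_append _ _, List.ne_nil_of_length_pos (by omega), by simp, hTw⟩⟩

lemma overlapsSome_cbfs_of_not_mem_setA {q n k : ℕ} (hq : 3 ≤ q) {w α β : List ℕ}
    (hw : w.length = n) (hwA : w ∉ SetA q n) (hk : k ≤ n / 2) (hα : α ∈ MotzkinSet q k)
    (hβ : β ∈ ElevatedSet q (n - k)) (hwe : w = α ++ β) : OverlapsSome (CBFS q n) w := by
  obtain ⟨e₁, he₁, e₂, he₂, rfl⟩ : w ∈ {w | ∃ α ∈ ElevatedSet q (n / 2),
      ∃ β ∈ ElevatedSet q (n / 2), w = α ++ β} :=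
    not_not.mp fun hrem => hwA ⟨⟨k, hk, α, hα, β, hβ, hwe⟩, hrem⟩
  obtain ⟨hlen₁, h2, -⟩ := heights_of_mem_elevatedSet he₁
  have hlen₂ := (heights_of_mem_elevatedSet he₂).1
  rw [List.length_append, hlen₁, hlen₂] at hw
  have hA := replicate_append_mem_setA (n := n) hq (nil_mem_motzkinSet q) he₁ (by omega)
    (by simp; omega)
  exact ⟨_, Or.inl (Or.inl hA), Or.inl ⟨e₁, List.prefix_append _ _,
    List.ne_nil_of_length_pos (by omega), by simp; omega, ⟨_, rfl⟩⟩⟩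

lemma overlapsSome_cbfs_of_motzkin_zero_prefix {q n : ℕ} (hq : 3 ≤ q) {w v : List ℕ}
    (hw : w.length = n) (hwC : w ∉ CBFS q n) (hv : v ∈ MotzkinSet q v.length)
    (hvw : v ++ [0] <+: w) : OverlapsSome (CBFS q n) w := by
  have hvn : v.length < n := by have := hvw.length_le; simp at this; omega
  by_cases hfac : ∃ j, (n + 1) / 2 ≤ j ∧ ∃ β ∈ ElevatedSet q j, β <:+: v
  · obtain ⟨x, β, j, hx, hj, hβ, hxβ⟩ := exists_motzkin_append_elevated_prefix hv hfac
    obtain ⟨hβlen, h2, -⟩ := heights_of_mem_elevatedSet hβ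
    have hxβn : x.length + j < n := by have := hxβ.length_le; simp at this; omega
    refine ⟨_, Or.inl (Or.inl (replicate_append_mem_setA hq hx hβ hj hxβn)),
      Or.inl ⟨x ++ β, hxβ.trans ((List.prefix_append v [0]).trans hvw), ?_, ?_,
        List.suffix_append _ _⟩⟩
    · exact List.ne_nil_of_length_pos (by simp; omega)
    · simp; omega
  push Not at hfac
  rcases Nat.lt_or_ge (v.length + 1) n with hlt | hge
  · refine ⟨_, Or.inr (replicate_append_mem_setC hq hv hvn hfac),
      Or.inl ⟨v ++ [0], hvw, by simp, by simp; omega, ⟨List.replicate (n - 1 - v.length) 2, ?_⟩⟩⟩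
    simp
  · have hwv : v ++ [0] = w := hvw.eq_of_length (by simp; omega)
    exact absurd (Or.inr ⟨v, by rwa [show n - 1 = v.length by omega], hfac, hwv.symm⟩) hwC

lemma mem_setB_of_heights {q n k : ℕ} {w : List ℕ} (hlt : ∀ a ∈ w, a < q) (hw : w.length = n)
    (hk : 0 < k) (hkn : k ≤ n / 2) (hpos : ∀ i, 0 < i → i ≤ k → 1 ≤ height w i)
    (hk1 : height w k = 1) (hT : w.drop k ∈ ElevatedSet q (n - k)) : w ∈ SetB q n := by
  obtain ⟨a, u, rfl⟩ := List.exists_cons_of_length_pos (by omega : 0 < w.length)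
  have ha : a = 1 := by
    have := hpos 1 one_pos (by omega)
    rw [show (1 : ℕ) = 0 + 1 from rfl, height_cons_succ, height_zero] at this
    exact mval_eq_one_iff.mp (by linarith [mval_le_one a])
  subst ha
  have hu : ∀ i, height u i = height (1 :: u) (i + 1) - 1 := fun i => by
    rw [height_cons_succ, mval_one]; ring
  obtain ⟨k, rfl⟩ := Nat.exists_eq_add_one_of_ne_zero hk.ne'
  refine ⟨k, by omega, u.take k, ?_, u.drop k, ?_, by rw [List.take_append_drop]⟩
  · refine take_mem_motzkinSet (fun b hb => hlt b (List.mem_cons_of_mem 1 hb))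
      (by simp at hw; omega) (fun i hi => ?_) (by rw [hu, hk1]; ring)
    have := hpos (i + 1) (by omega) (by omega)
    rw [hu]; omega
  · rwa [List.drop_succ_cons, show n - (k + 1) = n - k - 1 by omega] at hT

lemma overlapsSome_cbfs_of_height_lt_vsum {q n k₀ : ℕ} (hq : 3 ≤ q) {w : List ℕ}
    (hw : w.length = n) (hlt : ∀ a ∈ w, a < q) (hk₀ : 0 < k₀) (hk₀n : k₀ ≤ n)
    (hdip : height w k₀ < vsum w) : OverlapsSome (CBFS q n) w := by
  obtain ⟨k, hkn, hkV, hafter⟩ := exists_last_lt hk₀n hdip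
  have hend : height w n = vsum w := height_of_length_le hw.le
  have hk₀k : k₀ ≤ k := by
    by_contra h
    have := hafter k₀ (by omega) hk₀n
    omega
  have hkn' : k < n := lt_of_le_of_ne hkn (by rintro rfl; omega)
  have hkV' : height w k = vsum w - 1 := by
    have := height_succ_le w k
    have := hafter (k + 1) (by omega) (by omega)
    omega
  have hsplit : vsum w = height w k + vsum (w.drop k) := by
    rw [height, ← vsum_append, List.take_append_drop]
  refine overlapsSome_cbfs_of_positive_suffix hq (List.drop_suffix k w)
    (fun a ha => hlt a (List.mem_of_mem_drop ha)) (by simp; omega) (by simp; omega)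
    (fun r hr => ?_) (by omega)
  have hshift := height_add w k r
  rcases le_or_gt (k + r) n with h | h
  · have := hafter (k + r) (by omega) h
    omega
  · rw [height_of_length_le (by omega)] at hshift
    omega

lemma exists_height_eq_vsum_and_drop_mem_elevatedSet {q n : ℕ} {w : List ℕ}
    (hw : w.length = n) (hlt : ∀ a ∈ w, a < q) (hV : 0 ≤ vsum w)
    (hpen : height w (n - 1) = vsum w + 1) :
    ∃ k < n - 1, height w k = vsum w ∧ w.drop k ∈ ElevatedSet q (n - k) := by
  obtain ⟨k, hkn, hkV, hafter⟩ := exists_last_lt (f := height w) (c := vsum w + 1)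
    (b := n - 1) (Nat.zero_le _) (by rw [height_zero]; omega)
  have hkn' : k < n - 1 := lt_of_le_of_ne hkn (by rintro rfl; omega)
  have hkV' : height w k = vsum w := by
    have := height_succ_le w k
    have := hafter (k + 1) (by omega) (by omega)
    omega
  refine ⟨k, hkn', hkV', ?_⟩
  have h := (factor_mem_elevatedSet_iff hlt (s := k) (j := n - k)).mpr
    ⟨by omega, by omega, by rw [Nat.add_sub_cancel' (by omega), hkV', height_of_length_le hw.le],
      fun r hr0 hr => by have := hafter (k + r) (by omega) (by omega); omega⟩
  rwa [List.take_of_length_le (by simp; omega)] at h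

lemma overlapsSome_cbfs_of_height_nonneg {q n : ℕ} (hq : 3 ≤ q) {w : List ℕ}
    (hw : w.length = n) (hlt : ∀ a ∈ w, a < q) (hwC : w ∉ CBFS q n) (hlast : [0] <:+ w)
    (hnonneg : ∀ i, 0 ≤ height w i) : OverlapsSome (CBFS q n) w := by
  have hend : height w n = vsum w := height_of_length_le hw.le
  have hpen : height w (n - 1) = vsum w + 1 := by
    obtain ⟨u, rfl⟩ := hlast
    simp only [List.length_append, List.length_singleton] at hw
    rw [height_append_left (by omega), height_of_length_le (by omega)]
    simp
  by_cases hdip : ∃ k, 0 < k ∧ k ≤ n ∧ height w k < vsum w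
  · obtain ⟨k, hk, hkn, hkV⟩ := hdip
    exact overlapsSome_cbfs_of_height_lt_vsum hq hw hlt hk hkn hkV
  push Not at hdip
  obtain ⟨k, hkn, hkV, hT⟩ := exists_height_eq_vsum_and_drop_mem_elevatedSet hw hlt
    (hend ▸ hnonneg n) hpen
  by_cases hshort : n - k < (n + 1) / 2
  · exact overlapsSome_cbfs_of_short_elevated_suffix hq hT hshort (List.drop_suffix k w)
  rcases eq_or_lt_of_le (hnonneg n) with hV | hV
  · exact overlapsSome_cbfs_of_not_mem_setA hq hw (fun h => hwC (Or.inl (Or.inl h))) (by omega)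
      (take_mem_motzkinSet hlt (by omega) (fun i _ => hnonneg i) (by omega)) hT
      (List.take_append_drop k w).symm
  · have hk0 : 0 < k := Nat.pos_of_ne_zero (by rintro rfl; rw [height_zero] at hkV; omega)
    have h1 := hdip 1 one_pos (by omega)
    have : height w 1 ≤ 1 := by simpa using height_succ_le w 0
    refine absurd (Or.inl (Or.inr (mem_setB_of_heights hlt hw hk0 (by omega)
      (fun i hi _ => ?_) (by omega) hT))) hwC
    have := hdip i hi (by omega)
    omega

lemma overlapsSome_cbfs_of_zero_suffix {q n : ℕ} (hq : 3 ≤ q) {w : List ℕ}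
    (hw : w.length = n) (hlt : ∀ a ∈ w, a < q) (hwC : w ∉ CBFS q n) (hlast : [0] <:+ w) :
    OverlapsSome (CBFS q n) w := by
  by_cases hneg : ∃ i ≤ n, height w i < 0
  · obtain ⟨i, hin, hi⟩ := hneg
    obtain ⟨i₀, -, hi₀n, hi₀, hbefore⟩ := exists_first_lt (f := height w) (Nat.zero_le i) hi
    obtain ⟨i₀, rfl⟩ := Nat.exists_eq_add_one_of_ne_zero
      (by rintro rfl; rw [height_zero] at hi₀; omega : i₀ ≠ 0)
    have hprev := hbefore i₀ (Nat.zero_le _) (by omega)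
    have hstep := height_succ (w := w) (i := i₀) (by omega)
    have hzero : w[i₀]'(by omega) = 0 :=
      mval_eq_neg_one_iff.mp (by linarith [neg_one_le_mval w[i₀]])
    apply overlapsSome_cbfs_of_motzkin_zero_prefix hq hw hwC (v := w.take i₀)
    · rw [List.length_take, min_eq_left (by omega)]
      exact take_mem_motzkinSet hlt (by omega) (fun j hj => hbefore j (Nat.zero_le _) (by omega))
        (by linarith [neg_one_le_mval w[i₀]])
    · rw [← hzero, ← List.take_succ_eq_append_getElem]
      exact List.take_prefix _ w
  push Not at hneg
  refine overlapsSome_cbfs_of_height_nonneg hq hw hlt hwC hlast fun i => ?_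
  rcases le_or_gt i n with h | h
  · exact hneg i h
  · rw [height_of_length_le (by omega), ← height_of_length_le hw.le]
    exact hneg n le_rfl

/-- CBFS_q(n) is non-expandable on BF_q(n): for every bifix-free word
w ∈ BF_q(n) \ CBFS_q(n) there is w' ∈ CBFS_q(n) such that some nonempty proper prefix
of w is a suffix of w', or some nonempty proper prefix of w' is a suffix of w. -/
theorem cbfs_non_expandable (q n : ℕ) (hq : 3 ≤ q) (hn : 3 ≤ n)
    (w : List ℕ) (hw : w ∈ BF q n \ CBFS q n) :
    ∃ w' ∈ CBFS q n,
      (∃ u, u <+: w ∧ u ≠ [] ∧ u.length < w.length ∧ u <:+ w') ∨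
      (∃ u, u <+: w' ∧ u ≠ [] ∧ u.length < w'.length ∧ u <:+ w) := by
  obtain ⟨⟨hwlen, hlt, -⟩, hwC⟩ := hw
  obtain ⟨u, b, rfl⟩ : ∃ u b, w = u ++ [b] :=
    (List.eq_nil_or_concat' w).resolve_left (by rintro rfl; simp at hwlen; omega)
  have hb : [b] <:+ u ++ [b] := List.suffix_append u [b]
  rcases (by omega : b = 0 ∨ b = 1 ∨ 2 ≤ b) with rfl | rfl | hb2
  · exact overlapsSome_cbfs_of_zero_suffix hq hwlen hlt hwC hb
  · exact overlapsSome_cbfs_of_one_suffix hq hn hb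
  · exact overlapsSome_cbfs_of_color_suffix (by omega) hb2 (hlt b (by simp)) hb
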